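/- Trace Cauchy–Schwarz inequality with a split middle factor: For any N ∈ ℕ and any N×N complex matrices X, Y, Z, one has |⟨X·Y·Z⟩| ≤ (⟨X*·X·(Y·Y*)^{1/2}⟩ · ⟨Z·Z*·(Y*·Y)^{1/2}⟩)^{1/2}. -/

import Mathlib

/-!
Let `Q = Yᴴ Y`, `B = Q^{1/4}` and `R` the pseudo-inverse of `B`. Since `Y` vanishes on the kernel
of `Q`, the matrix `A = Y R` satisfies `A B = Y` and `A Aᴴ = (Y Yᴴ)^{1/2}`, while
`Bᴴ B = (Yᴴ Y)^{1/2}`. Then `Tr (X Y Z) = Tr ((X A) (B Z))`, and Cauchy–Schwarz for the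
Hilbert–Schmidt inner product bounds it by `‖X A‖₂ ‖B Z‖₂`, whose squares are
`Tr (Xᴴ X (Y Yᴴ)^{1/2})` and `Tr (Z Zᴴ (Yᴴ Y)^{1/2})` by cyclicity of the trace.
-/

open Matrix
open scoped ComplexOrder
open scoped MatrixOrder

noncomputable section

/-- The normalized trace `⟨A⟩ := N⁻¹ Tr A`. -/
def ntr {N : ℕ} (A : Matrix (Fin N) (Fin N) ℂ) : ℂ :=
  (N : ℂ)⁻¹ * A.trace

namespace Matrix

variable {𝕜 n : Type*} [RCLike 𝕜] [Fintype n]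

lemma re_trace_mul_conjTranspose_nonneg {m : Type*} [Fintype m] (P : Matrix n m 𝕜) :
    0 ≤ RCLike.re (P * Pᴴ).trace :=
  (RCLike.nonneg_iff.mp (posSemidef_self_mul_conjTranspose P).trace_nonneg).1

variable [DecidableEq n]

lemma norm_trace_mul_le (P Q : Matrix n n 𝕜) :
    ‖(P * Q).trace‖ ≤ √(RCLike.re (P * Pᴴ).trace * RCLike.re (Qᴴ * Q).trace) := by
  let _ := toMatrixSeminormedAddCommGroup (1 : Matrix n n 𝕜) PosSemidef.one
  let _ := toMatrixInnerProductSpace (1 : Matrix n n 𝕜) PosSemidef.one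
  have h : ‖(Q * 1 * Pᴴᴴ).trace‖ ≤
      √(RCLike.re (Pᴴ * 1 * Pᴴᴴ).trace) * √(RCLike.re (Q * 1 * Qᴴ).trace) :=
    norm_inner_le_norm (𝕜 := 𝕜) Pᴴ Q
  simp only [Matrix.mul_one, conjTranspose_conjTranspose] at h
  rwa [trace_mul_comm Q, trace_mul_comm Pᴴ, trace_mul_comm Q,
    ← Real.sqrt_mul (re_trace_mul_conjTranspose_nonneg P)] at h

lemma continuousOn_real_spectrum (A : Matrix n n 𝕜) (f : ℝ → ℝ) :
    ContinuousOn f (spectrum ℝ A) :=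
  A.finite_real_spectrum.continuousOn f

lemma mul_cfc_conjTranspose_mul_self_eq_self (Y : Matrix n n 𝕜) {f : ℝ → ℝ}
    (hf : ∀ x, 0 < x → f x = 1) : Y * cfc f (Yᴴ * Y) = Y := by
  have hc := (Yᴴ * Y).continuousOn_real_spectrum
  have hQ : IsSelfAdjoint (Yᴴ * Y) := isHermitian_conjTranspose_mul_self Y
  have hQE : (Yᴴ * Y) * cfc (fun x => f x - 1) (Yᴴ * Y) = 0 := by
    conv_lhs => enter [1]; rw [← cfc_id' ℝ (Yᴴ * Y)]
    rw [← cfc_mul (fun x => x) _ _ (hc _) (hc _)]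
    refine (cfc_congr fun x hx => ?_).trans (cfc_zero ℝ (Yᴴ * Y))
    rcases (spectrum_nonneg_of_nonneg (posSemidef_conjTranspose_mul_self Y).nonneg hx).eq_or_lt
      with h | h
    · simp [← h]
    · simp [hf x h]
  rwa [conjTranspose_mul_self_mul_eq_zero, cfc_sub _ _ _ (hc _), cfc_const_one ℝ _,
    Matrix.mul_sub, Matrix.mul_one, sub_eq_zero] at hQE

lemma exists_mul_eq_with_sqrt_factors (Y : Matrix n n 𝕜) :
    ∃ A B : Matrix n n 𝕜, A * B = Y ∧
      A * Aᴴ = CFC.sqrt (Y * Yᴴ) ∧ Bᴴ * B = CFC.sqrt (Yᴴ * Y) := by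
  have hc := (Yᴴ * Y).continuousOn_real_spectrum
  have hQ : 0 ≤ Yᴴ * Y := (posSemidef_conjTranspose_mul_self Y).nonneg
  set s : ℝ → ℝ := fun x => √√x
  set B := cfc s (Yᴴ * Y)
  -- `R` is the pseudo-inverse of `B`, since `(s 0)⁻¹ = 0⁻¹ = 0`.
  set R := cfc (fun x => (s x)⁻¹) (Yᴴ * Y)
  have hB : Bᴴ = B := cfc_predicate s (Yᴴ * Y)
  have hR : Rᴴ = R := cfc_predicate (fun x => (s x)⁻¹) (Yᴴ * Y)
  refine ⟨Y * R, B, ?_, ?_, ?_⟩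
  · rw [Matrix.mul_assoc, ← cfc_mul _ _ _ (hc _) (hc _)]
    exact mul_cfc_conjTranspose_mul_self_eq_self Y fun x hx => inv_mul_cancel₀ (by positivity)
  · refine (CFC.sqrt_unique ?_ (posSemidef_self_mul_conjTranspose _).nonneg).symm
    have hRQR : R * R * (Yᴴ * Y) * R * R =
        cfc (fun x => (s x)⁻¹ * (s x)⁻¹ * x * (s x)⁻¹ * (s x)⁻¹) (Yᴴ * Y) := by
      rw [cfc_mul _ _ _ (hc _) (hc _), cfc_mul _ _ _ (hc _) (hc _), cfc_mul _ _ _ (hc _) (hc _),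
        cfc_mul _ _ _ (hc _) (hc _), cfc_id' ℝ (Yᴴ * Y)]
    calc Y * R * (Y * R)ᴴ * (Y * R * (Y * R)ᴴ) = Y * (R * R * (Yᴴ * Y) * R * R) * Yᴴ := by
          simp only [conjTranspose_mul, hR, Matrix.mul_assoc]
      _ = Y * Yᴴ := by
          rw [hRQR, mul_cfc_conjTranspose_mul_self_eq_self Y fun x hx => ?_]
          have hs : s x ^ 4 = x := by
            rw [show 4 = 2 * 2 from rfl, pow_mul, Real.sq_sqrt (Real.sqrt_nonneg x),
              Real.sq_sqrt hx.le]
          field_simp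
          rw [hs, div_self hx.ne']
  · rw [hB, ← cfc_mul _ _ _ (hc _) (hc _), CFC.sqrt_eq_real_sqrt _ hQ, cfcₙ_eq_cfc]
    exact cfc_congr fun x _ => Real.mul_self_sqrt (Real.sqrt_nonneg x)

theorem norm_trace_mul_mul_le (X Y Z : Matrix n n 𝕜) :
    ‖(X * Y * Z).trace‖ ≤
      √(RCLike.re (Xᴴ * X * CFC.sqrt (Y * Yᴴ)).trace *
        RCLike.re (Z * Zᴴ * CFC.sqrt (Yᴴ * Y)).trace) := by
  obtain ⟨A, B, rfl, hA, hB⟩ := exists_mul_eq_with_sqrt_factors Y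
  have hXA : (X * A * (X * A)ᴴ).trace = (Xᴴ * X * (A * Aᴴ)).trace := by
    rw [← trace_mul_cycle X (A * Aᴴ) Xᴴ, conjTranspose_mul]
    simp only [Matrix.mul_assoc]
  have hBZ : ((B * Z)ᴴ * (B * Z)).trace = (Z * Zᴴ * (Bᴴ * B)).trace := by
    rw [← trace_mul_cycle Zᴴ (Bᴴ * B) Z, conjTranspose_mul]
    simp only [Matrix.mul_assoc]
  rw [← hA, ← hB, ← hXA, ← hBZ, show X * (A * B) * Z = X * A * (B * Z) by
    simp only [Matrix.mul_assoc]]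
  exact norm_trace_mul_le _ _

end Matrix

lemma norm_ntr {N : ℕ} (A : Matrix (Fin N) (Fin N) ℂ) : ‖ntr A‖ = (N : ℝ)⁻¹ * ‖A.trace‖ := by
  rw [ntr, norm_mul, norm_inv, Complex.norm_natCast]

lemma re_ntr {N : ℕ} (A : Matrix (Fin N) (Fin N) ℂ) : (ntr A).re = (N : ℝ)⁻¹ * A.trace.re := by
  rw [ntr, ← Complex.ofReal_natCast, ← Complex.ofReal_inv, Complex.re_ofReal_mul]

/-- **Trace Cauchy–Schwarz inequality with a split middle factor.** -/
theorem trace_cauchy_schwarz_split_middle {N : ℕ} (X Y Z : Matrix (Fin N) (Fin N) ℂ) :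
    ‖ntr (X * Y * Z)‖ ≤
      Real.sqrt ((ntr (Xᴴ * X * CFC.sqrt (Y * Yᴴ))).re *
        (ntr (Z * Zᴴ * CFC.sqrt (Yᴴ * Y))).re) := by
  have hN : (0 : ℝ) ≤ (N : ℝ)⁻¹ := by positivity
  rw [norm_ntr, re_ntr, re_ntr, mul_mul_mul_comm, ← sq, Real.sqrt_mul (sq_nonneg _),
    Real.sqrt_sq hN]
  exact mul_le_mul_of_nonneg_left (norm_trace_mul_mul_le X Y Z) hN

end
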